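/- Let n ≥ 3, ε > 0, α the positive root of α^2+(n-1)α-(n-2)=0, and β := (2α^2 + α(n-1))/(n-3+α). Then U(r) := r^β (ε+r^2)^{(α-β)/2} satisfies L U ≥ 0 on (0,1), where L U := U'' + ((n-2)/r + 2r/(ε+r^2)) U' - (n-2)/r^2 · U; i.e., U is a subsolution. -/
import Mathlib


noncomputable def L (n : ℕ) (ε : ℝ) (V : ℝ → ℝ) (r : ℝ) : ℝ :=
  deriv (deriv V) r + (((n : ℝ) - 2) / r + 2 * r / (ε + r ^ 2)) * deriv V r
    - ((n : ℝ) - 2) / r ^ 2 * V r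

private lemma hasDerivAt_F (ε p q r : ℝ) (hε : 0 < ε) (hr : 0 < r) :
    HasDerivAt (fun x : ℝ => x ^ p * (ε + x ^ 2) ^ q)
      (p * r ^ (p - 1) * (ε + r ^ 2) ^ q
        + r ^ p * (q * (ε + r ^ 2) ^ (q - 1) * (2 * r))) r := by
  have h1 : HasDerivAt (fun x : ℝ => x ^ p) (p * r ^ (p - 1)) r :=
    Real.hasDerivAt_rpow_const (Or.inl hr.ne')
  have h2 : HasDerivAt (fun x : ℝ => ε + x ^ 2) (2 * r) r := by
    simpa using ((hasDerivAt_pow 2 r).const_add ε)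
  have hw : (0:ℝ) < ε + r ^ 2 := by positivity
  have h3 : HasDerivAt (fun x : ℝ => (ε + x ^ 2) ^ q)
      (q * (ε + r ^ 2) ^ (q - 1) * (2 * r)) r := by
    have := h2.rpow_const (p := q) (Or.inl hw.ne')
    convert this using 1
    ring
  exact h1.mul h3

private lemma deriv_U_eq (ε p q r : ℝ) (hε : 0 < ε) (hr : 0 < r) :
    deriv (fun x : ℝ => x ^ p * (ε + x ^ 2) ^ q) r
      = p * (r ^ (p - 1) * (ε + r ^ 2) ^ q)
        + 2 * q * (r ^ (p + 1) * (ε + r ^ 2) ^ (q - 1)) := by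
  rw [(hasDerivAt_F ε p q r hε hr).deriv, Real.rpow_add_one hr.ne' p]
  ring

private lemma deriv2_U_eq (ε p q r : ℝ) (hε : 0 < ε) (hr : 0 < r) :
    deriv (deriv (fun x : ℝ => x ^ p * (ε + x ^ 2) ^ q)) r
      = p * ((p - 1) * r ^ (p - 2) * (ε + r ^ 2) ^ q
            + r ^ (p - 1) * (q * (ε + r ^ 2) ^ (q - 1) * (2 * r)))
        + 2 * q * ((p + 1) * r ^ p * (ε + r ^ 2) ^ (q - 1)
            + r ^ (p + 1) * ((q - 1) * (ε + r ^ 2) ^ (q - 2) * (2 * r))) := by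
  have hev : deriv (fun x : ℝ => x ^ p * (ε + x ^ 2) ^ q)
      =ᶠ[nhds r] (fun x : ℝ => p * (x ^ (p - 1) * (ε + x ^ 2) ^ q)
        + 2 * q * (x ^ (p + 1) * (ε + x ^ 2) ^ (q - 1))) := by
    filter_upwards [eventually_gt_nhds hr] with x hx
    exact deriv_U_eq ε p q x hε hx
  rw [hev.deriv_eq]
  have h1 := ((hasDerivAt_F ε (p - 1) q r hε hr).const_mul p)
  have h2 := ((hasDerivAt_F ε (p + 1) (q - 1) r hε hr).const_mul (2 * q))
  have h := (h1.add h2).deriv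
  rw [show p - 1 - 1 = p - 2 by ring, show p + 1 - 1 = p by ring,
    show q - 1 - 1 = q - 2 by ring] at h
  exact h

theorem U_subsolution (n : ℕ) (hn : 3 ≤ n) (ε : ℝ) (hε : 0 < ε) (α : ℝ)
    (hα : 0 < α) (hroot : α ^ 2 + ((n : ℝ) - 1) * α - ((n : ℝ) - 2) = 0) :
    ∀ r ∈ Set.Ioo (0 : ℝ) 1,
      0 ≤ L n ε (fun r => r ^ ((2 * α ^ 2 + α * ((n : ℝ) - 1)) / ((n : ℝ) - 3 + α))
        * (ε + r ^ 2) ^ ((α - (2 * α ^ 2 + α * ((n : ℝ) - 1)) / ((n : ℝ) - 3 + α)) / 2)) r := by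
  intro r hr
  obtain ⟨hr0, hr1⟩ := hr
  have h3 : (3:ℝ) ≤ (n:ℝ) := by exact_mod_cast hn
  set p : ℝ := (2 * α ^ 2 + α * ((n : ℝ) - 1)) / ((n : ℝ) - 3 + α) with hp_def
  set q : ℝ := (α - p) / 2 with hq_def
  have hd : (0:ℝ) < (n:ℝ) - 3 + α := by linarith
  have hbd : p * ((n:ℝ) - 3 + α) = α * (2 * α + ((n:ℝ) - 1)) := by
    rw [hp_def, div_mul_cancel₀ _ hd.ne']; ring
  have hw : (0:ℝ) < ε + r ^ 2 := by positivity
  -- key coefficient identities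
  have hC2 : (0:ℝ) ≤ p ^ 2 + ((n:ℝ) - 3) * p - ((n:ℝ) - 2) := by
    have key : (p ^ 2 + ((n:ℝ) - 3) * p - ((n:ℝ) - 2)) * ((n:ℝ) - 3 + α) ^ 2
        = α ^ 2 * (3 * α ^ 2 + 3 * α * ((n:ℝ) - 1) + ((n:ℝ) - 2) ^ 2 + 3) := by
      linear_combination (((n:ℝ) - 3) ^ 2 + 2 * α * ((n:ℝ) - 2) + 2 * α ^ 2
          + p * ((n:ℝ) - 3 + α)) * hbd + ((n:ℝ) - 3 + α) ^ 2 * hroot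
    nlinarith [mul_pos hd hd, sq_nonneg α, sq_nonneg ((n:ℝ) - 2), mul_pos hα hα,
      mul_pos hα (by linarith : (0:ℝ) < (n:ℝ) - 1)]
  have hpp : (0:ℝ) < p := by
    rw [hp_def]
    apply div_pos _ hd
    nlinarith
  -- rpow splitting identities
  have e1 : r ^ (p - 1) = r ^ (p - 2) * r := by
    rw [show p - 1 = (p - 2) + 1 by ring, Real.rpow_add_one hr0.ne']
  have e2 : r ^ p = r ^ (p - 2) * r ^ 2 := by
    rw [show p = (p - 2) + 1 + 1 by ring, Real.rpow_add_one hr0.ne',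
      Real.rpow_add_one hr0.ne']; ring
  have e3 : r ^ (p + 1) = r ^ (p - 2) * r ^ 3 := by
    rw [show p + 1 = (p - 2) + 1 + 1 + 1 by ring, Real.rpow_add_one hr0.ne',
      Real.rpow_add_one hr0.ne', Real.rpow_add_one hr0.ne']; ring
  have f1 : (ε + r ^ 2) ^ (q - 1) = (ε + r ^ 2) ^ (q - 2) * (ε + r ^ 2) := by
    rw [show q - 1 = (q - 2) + 1 by ring, Real.rpow_add_one hw.ne']
  have f2 : (ε + r ^ 2) ^ q = (ε + r ^ 2) ^ (q - 2) * (ε + r ^ 2) ^ 2 := by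
    rw [show q = (q - 2) + 1 + 1 by ring, Real.rpow_add_one hw.ne',
      Real.rpow_add_one hw.ne']; ring
  have hLU : L n ε (fun x : ℝ => x ^ p * (ε + x ^ 2) ^ q) r
      = r ^ (p - 2) * (ε + r ^ 2) ^ (q - 2) *
        ((p ^ 2 + ((n:ℝ) - 3) * p - ((n:ℝ) - 2)) * (ε + r ^ 2) ^ 2
          + (4 * p * q + 2 * q * ((n:ℝ) - 1) + 2 * p) * r ^ 2 * (ε + r ^ 2)
          + 4 * q ^ 2 * r ^ 4) := by
    rw [L, deriv2_U_eq ε p q r hε hr0, deriv_U_eq ε p q r hε hr0]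
    rw [e1, e2, e3, f1, f2]
    field_simp
    ring
  rw [hLU]
  have hQ : (p ^ 2 + ((n:ℝ) - 3) * p - ((n:ℝ) - 2)) * (ε + r ^ 2) ^ 2
      + (4 * p * q + 2 * q * ((n:ℝ) - 1) + 2 * p) * r ^ 2 * (ε + r ^ 2)
      + 4 * q ^ 2 * r ^ 4
      = (p ^ 2 + ((n:ℝ) - 3) * p - ((n:ℝ) - 2)) * ε ^ 2 + (α * p) * (ε * r ^ 2) := by
    have hq2 : 2 * q = α - p := by rw [hq_def]; ring
    linear_combination ((2 * p + ((n:ℝ) - 1)) * r ^ 2 * (ε + r ^ 2)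
        + (2 * q + α - p) * r ^ 4) * hq2 + (2 * ε * r ^ 2 + r ^ 4) * hroot
        + (ε * r ^ 2) * hbd
  rw [hQ]
  have hx : (0:ℝ) ≤ r ^ (p - 2) := Real.rpow_nonneg hr0.le _
  have hy : (0:ℝ) ≤ (ε + r ^ 2) ^ (q - 2) := Real.rpow_nonneg hw.le _
  have : (0:ℝ) ≤ (p ^ 2 + ((n:ℝ) - 3) * p - ((n:ℝ) - 2)) * ε ^ 2
      + (α * p) * (ε * r ^ 2) := by
    have h1 : (0:ℝ) ≤ (p ^ 2 + ((n:ℝ) - 3) * p - ((n:ℝ) - 2)) * ε ^ 2 :=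
      mul_nonneg hC2 (sq_nonneg _)
    have h2 : (0:ℝ) ≤ (α * p) * (ε * r ^ 2) := by positivity
    linarith
  positivity
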